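/- For any round, i.e., any range of steps s0 ≤ i < s1, and any processor p, assuming (Partition), (Interval) and (NoDoubleMigration), the initial attached set and the round-level enabled set are disjoint from the round-level set of nodes migrated to p: ( R s0 p ∪ ⋃_{s0 ≤ i < s1} E i p ) ∩ ( ⋃_{s0 ≤ i < s1} M⁻ i p ) = ∅. -/

import Mathlib

open Set

variable {P V : Type*}

/-- `Rtot R i` is the set of ready nodes at step `i`. -/
def Rtot (R : ℕ → P → Set V) (i : ℕ) : Set V := ⋃ p, R i p

/-- Nodes enabled by `p` at step `i`. -/
def En (R : ℕ → P → Set V) (i : ℕ) (p : P) : Set V := R (i + 1) p \ Rtot R i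

/-- Nodes executed (computed) by `p` at step `i`. -/
def Ex (R : ℕ → P → Set V) (i : ℕ) (p : P) : Set V := R i p \ Rtot R (i + 1)

/-- Nodes migrated from `p` at step `i`. -/
def Mout (R : ℕ → P → Set V) (i : ℕ) (p : P) : Set V :=
  R i p ∩ (Rtot R (i + 1) \ R (i + 1) p)

/-- Nodes migrated to `p` at step `i`. -/
def Mi (R : ℕ → P → Set V) (i : ℕ) (p : P) : Set V :=
  R (i + 1) p ∩ (Rtot R i \ R i p)

theorem Nat.exists_mem_Ico_and_not_succ {p : ℕ → Prop} {a b : ℕ} (hab : a ≤ b) (ha : p a)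
    (hb : ¬ p b) : ∃ k ∈ Set.Ico a b, p k ∧ ¬ p (k + 1) := by
  by_contra! hstep
  have hupto : ∀ n, a ≤ n → n ≤ b → p n := by
    intro n han
    induction n, han using Nat.le_induction with
    | base => exact fun _ => ha
    | succ n han ih => exact fun hnb => hstep n ⟨han, hnb⟩ (ih (by omega))
  exact hb (hupto b hab le_rfl)

section Schedule

variable {R : ℕ → P → Set V} {μ : V} {i j : ℕ} {p : P}

theorem mem_Rtot_of_mem {a : ℕ} (h : μ ∈ R a p) : μ ∈ Rtot R a :=
  mem_iUnion.mpr ⟨p, h⟩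

theorem mem_Rtot_of_mem_Mi (h : μ ∈ Mi R j p) : μ ∈ Rtot R j :=
  h.2.1

theorem exists_mem_Mout_of_mem_Mi
    (hPart : ∀ i : ℕ, ∀ p q : P, p ≠ q → Disjoint (R i p) (R i q))
    (h : μ ∈ Mi R j p) : ∃ q, μ ∈ Mout R j q := by
  obtain ⟨hp, hready, hnot⟩ := h
  obtain ⟨q, hq⟩ := mem_iUnion.mp hready
  have hqp : q ≠ p := fun h => hnot (h ▸ hq)
  exact ⟨q, hq, mem_Rtot_of_mem hp, fun hq' => (hPart (j + 1) q p hqp).le_bot ⟨hq', hp⟩⟩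

/-- By (Interval) the node stays ready from `a` to `b`, so when it leaves `p` it migrates
rather than being executed. -/
theorem exists_mem_Mout_of_mem_of_not_mem
    (hInterval : ∀ (μ : V) (i j k : ℕ), i ≤ j → j ≤ k →
      μ ∈ Rtot R i → μ ∈ Rtot R k → μ ∈ Rtot R j)
    {a b : ℕ} (hab : a ≤ b) (ha : μ ∈ R a p) (hb : μ ∉ R b p) (hready : μ ∈ Rtot R b) :
    ∃ k ∈ Set.Ico a b, μ ∈ Mout R k p := by
  obtain ⟨k, ⟨hak, hkb⟩, hkp, hkp'⟩ :=
    Nat.exists_mem_Ico_and_not_succ (p := (μ ∈ R · p)) hab ha hb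
  have hready' : μ ∈ Rtot R (k + 1) :=
    hInterval μ a (k + 1) b (by omega) hkb (mem_Rtot_of_mem ha) hready
  exact ⟨k, ⟨hak, hkb⟩, hkp, hready', hkp'⟩

theorem notMem_En_of_mem_Rtot_of_le
    (hInterval : ∀ (μ : V) (i j k : ℕ), i ≤ j → j ≤ k →
      μ ∈ Rtot R i → μ ∈ Rtot R k → μ ∈ Rtot R j)
    (hji : j ≤ i) (hj : μ ∈ Rtot R j) : μ ∉ En R i p := fun ⟨hp, hnot⟩ =>
  hnot (hInterval μ j i (i + 1) hji i.le_succ hj (mem_Rtot_of_mem hp))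

/-- Before migrating to `p` at step `j`, the node must have migrated away from `p` at an earlier
step of the round, a second migration that (NoDoubleMigration) forbids. -/
theorem notMem_Mi_of_mem_of_le {s0 s1 a : ℕ}
    (hPart : ∀ i : ℕ, ∀ p q : P, p ≠ q → Disjoint (R i p) (R i q))
    (hInterval : ∀ (μ : V) (i j k : ℕ), i ≤ j → j ≤ k →
      μ ∈ Rtot R i → μ ∈ Rtot R k → μ ∈ Rtot R j)
    (hNoDouble : ∀ i ∈ Set.Ico s0 s1, ∀ j ∈ Set.Ico s0 s1, ∀ (q r : P) (μ : V),
      μ ∈ Mout R i q → μ ∈ Mout R j r → i = j ∧ q = r)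
    (hs0a : s0 ≤ a) (haj : a ≤ j) (hj : j < s1) (ha : μ ∈ R a p) : μ ∉ Mi R j p := by
  intro hMi
  obtain ⟨q, hq⟩ := exists_mem_Mout_of_mem_Mi hPart hMi
  obtain ⟨k, ⟨hak, hkj⟩, hkp⟩ :=
    exists_mem_Mout_of_mem_of_not_mem hInterval haj ha hMi.2.2 (mem_Rtot_of_mem_Mi hMi)
  exact hkj.ne (hNoDouble k ⟨by omega, by omega⟩ j ⟨by omega, hj⟩ p q μ hkp hq).1

end Schedule

theorem initial_and_enabled_disjoint_from_migrated_in (R : ℕ → P → Set V) (s0 s1 : ℕ)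
    (hPart : ∀ i : ℕ, ∀ p q : P, p ≠ q → Disjoint (R i p) (R i q))
    (hInterval : ∀ (μ : V) (i j k : ℕ), i ≤ j → j ≤ k →
      μ ∈ Rtot R i → μ ∈ Rtot R k → μ ∈ Rtot R j)
    (hNoDouble : ∀ i ∈ Set.Ico s0 s1, ∀ j ∈ Set.Ico s0 s1, ∀ (q r : P) (μ : V),
      μ ∈ Mout R i q → μ ∈ Mout R j r → i = j ∧ q = r)
    (p : P) :
    (R s0 p ∪ ⋃ i ∈ Set.Ico s0 s1, En R i p) ∩ (⋃ i ∈ Set.Ico s0 s1, Mi R i p) = ∅ := by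
  refine eq_empty_of_forall_notMem fun μ ⟨hstart, hmigr⟩ => ?_
  obtain ⟨j, hj, hMi⟩ := mem_iUnion₂.mp hmigr
  rcases hstart with hs0 | hEn
  · exact notMem_Mi_of_mem_of_le hPart hInterval hNoDouble le_rfl hj.1 hj.2 hs0 hMi
  obtain ⟨i, ⟨hs0i, -⟩, hEn⟩ := mem_iUnion₂.mp hEn
  rcases lt_or_ge i j with hij | hji
  · exact notMem_Mi_of_mem_of_le hPart hInterval hNoDouble (hs0i.trans i.le_succ) hij hj.2
      hEn.1 hMi
  · exact notMem_En_of_mem_Rtot_of_le hInterval hji (mem_Rtot_of_mem_Mi hMi) hEn
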